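/- Let κ_g, κ_n be constants with κ_g = 1/R_y (R_y > 0), and κ_n ∈ [−1/R_p, 1/R_p] arbitrary. Then the curve X(φ) = ((sin φ)/K, κ_g(1 − cos φ)/K², κ_n(1 − cos φ)/K²), K = √(κ_g² + κ_n²), lies on the sphere of radius R_y centered at (0, R_y, 0): ‖X(φ) − (0, R_y, 0)‖² = R_y² for all φ. -/

import Mathlib

/-!
The sphere of radius `R` about `(0, R, 0)` is the locus `‖p‖² = 2 R p_y`. Since `K² = κg² + κn²`,
the last two coordinates of `X φ` contribute `(1 - cos φ)² / K²`, so
`‖X φ‖² = (sin² φ + (1 - cos φ)²) / K² = 2 (1 - cos φ) / K²`, and this is `2 Ry · κg (1 - cos φ) / K²`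
because `Ry κg = 1`.
-/

noncomputable def v3 (a b c : ℝ) : EuclideanSpace ℝ (Fin 3) := WithLp.toLp 2 ![a, b, c]

lemma norm_v3_sq (a b c : ℝ) : ‖v3 a b c‖ ^ 2 = a ^ 2 + b ^ 2 + c ^ 2 := by
  rw [v3, EuclideanSpace.norm_eq, Real.sq_sqrt (by positivity)]
  simp [Fin.sum_univ_three, sq_abs]

lemma v3_sub (a b c d e f : ℝ) : v3 a b c - v3 d e f = v3 (a - d) (b - e) (c - f) := by
  ext i
  fin_cases i <;> simp [v3]

lemma norm_v3_sub_v3_zero_sq {a b c R : ℝ} (h : a ^ 2 + b ^ 2 + c ^ 2 = 2 * R * b) :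
    ‖v3 a b c - v3 0 R 0‖ ^ 2 = R ^ 2 := by
  rw [v3_sub, norm_v3_sq]
  linear_combination h

lemma sin_sq_add_one_sub_cos_sq (φ : ℝ) :
    Real.sin φ ^ 2 + (1 - Real.cos φ) ^ 2 = 2 * (1 - Real.cos φ) := by
  linear_combination Real.sin_sq_add_cos_sq φ

lemma yaw_curve_sq_sum {κg κn K : ℝ} (hK : K ^ 2 = κg ^ 2 + κn ^ 2) (hK0 : K ≠ 0) (φ : ℝ) :
    (Real.sin φ / K) ^ 2 + (κg * (1 - Real.cos φ) / K ^ 2) ^ 2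
      + (κn * (1 - Real.cos φ) / K ^ 2) ^ 2 = 2 * (1 - Real.cos φ) / K ^ 2 := by
  field_simp
  linear_combination K ^ 2 * sin_sq_add_one_sub_cos_sq φ - (1 - Real.cos φ) ^ 2 * hK

theorem yaw_sphere_general (κg κn Ry : ℝ) (hRy : 0 < Ry)
    (hκg : κg = 1 / Ry)
    (K : ℝ) (hK : K = Real.sqrt (κg ^ 2 + κn ^ 2))
    (X : ℝ → EuclideanSpace ℝ (Fin 3))
    (hX : ∀ φ : ℝ, X φ =
      v3 (Real.sin φ / K) (κg * (1 - Real.cos φ) / K ^ 2) (κn * (1 - Real.cos φ) / K ^ 2)) :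
    ∀ φ : ℝ, ‖X φ - v3 0 Ry 0‖ ^ 2 = Ry ^ 2 := by
  intro φ
  have hRyκg : Ry * κg = 1 := by rw [hκg]; field_simp
  have hK2 : K ^ 2 = κg ^ 2 + κn ^ 2 := by rw [hK, Real.sq_sqrt (by positivity)]
  have hK0 : K ≠ 0 := by
    rintro rfl
    have : 0 < κg ^ 2 := by rw [hκg]; positivity
    nlinarith [sq_nonneg κn]
  rw [hX]
  apply norm_v3_sub_v3_zero_sq
  rw [yaw_curve_sq_sum hK2 hK0]
  linear_combination (-2 * (1 - Real.cos φ) / K ^ 2) * hRyκg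

/-- Yaw analogue of the pitch-sphere lemma: segments with maximal geodesic
curvature `κ_g = 1/R_y` lie on the sphere of radius `R_y` centered at
`(0, R_y, 0)`, for any pitch rate `κ_n ∈ [−1/R_p, 1/R_p]`. -/
theorem yaw_sphere (κg κn Ry Rp : ℝ) (hRy : 0 < Ry) (hRp : 0 < Rp)
    (hκg : κg = 1 / Ry) (hκn : κn ∈ Set.Icc (-(1 / Rp)) (1 / Rp))
    (K : ℝ) (hK : K = Real.sqrt (κg ^ 2 + κn ^ 2))
    (X : ℝ → EuclideanSpace ℝ (Fin 3))
    (hX : ∀ φ : ℝ, X φ =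
      v3 (Real.sin φ / K) (κg * (1 - Real.cos φ) / K ^ 2) (κn * (1 - Real.cos φ) / K ^ 2)) :
    ∀ φ : ℝ, ‖X φ - v3 0 Ry 0‖ ^ 2 = Ry ^ 2 :=
  yaw_sphere_general κg κn Ry hRy hκg K hK X hX
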